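/- Let τ ↦ (x1(τ), x2(τ), z5(τ), z6(τ)) be a differentiable solution of the averaged ESC closed-loop system defined for all τ ≥ 0 with z5(0)² + z6(0)² = 1. If C1 c1 x1(τ) z5(τ) + C2 c2 x2(τ) z6(τ) = 0 for all τ ≥ 0, then x1(τ) = 0 and x2(τ) = 0 for all τ ≥ 0. -/

import Mathlib

/-!
Along any solution the radius `z5² + z6²` is conserved, so `(z5, z6)` stays on the unit circle.
Write `p = C1 c1 x1`, `q = C2 c2 x2`. The output `M = p z5 + q z6` satisfies
`M' = -(a k1/ω0)(C1 c1 z5² + C2 c2 z6²) M + (a k2/ω0) E²` with `E = p z6 - q z5`, so if `M` vanishes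
identically then so does `E`. Then `(p, q)` is orthogonal to the unit vector `(z5, z6)` and to its
rotation `(z6, -z5)`, hence `p = q = 0`.
-/

/-- The averaged ESC closed-loop system with positive constants `a, k1, k2, ω0, C1, C2, c1, c2`:
`x1' = −(a k1/ω0) z5 (C1 c1 x1 z5 + C2 c2 x2 z6)`,
`x2' = −(a k1/ω0) z6 (C1 c1 x1 z5 + C2 c2 x2 z6)`,
`z5' = (a k2/ω0) z6 (C1 c1 x1 z6 − C2 c2 x2 z5)`,
`z6' = −(a k2/ω0) z5 (C1 c1 x1 z6 − C2 c2 x2 z5)`, holding for all `τ ∈ s`. -/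
def AvgESC (a k1 k2 ω0 C1 C2 c1 c2 : ℝ) (x1 x2 z5 z6 : ℝ → ℝ) (s : Set ℝ) : Prop :=
  ∀ τ ∈ s,
    HasDerivAt x1
      (-(a * k1 / ω0) * z5 τ * (C1 * c1 * x1 τ * z5 τ + C2 * c2 * x2 τ * z6 τ)) τ ∧
    HasDerivAt x2
      (-(a * k1 / ω0) * z6 τ * (C1 * c1 * x1 τ * z5 τ + C2 * c2 * x2 τ * z6 τ)) τ ∧
    HasDerivAt z5
      ((a * k2 / ω0) * z6 τ * (C1 * c1 * x1 τ * z6 τ - C2 * c2 * x2 τ * z5 τ)) τ ∧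
    HasDerivAt z6
      (-(a * k2 / ω0) * z5 τ * (C1 * c1 * x1 τ * z6 τ - C2 * c2 * x2 τ * z5 τ)) τ

theorem eq_zero_of_mul_add_mul_eq_zero_of_mul_sub_mul_eq_zero {R : Type*} [CommRing R]
    {p q u v : R} (h₁ : p * u + q * v = 0) (h₂ : p * v - q * u = 0) (huv : u ^ 2 + v ^ 2 = 1) :
    p = 0 ∧ q = 0 :=
  ⟨by linear_combination u * h₁ + v * h₂ - p * huv,
    by linear_combination v * h₁ - u * h₂ - q * huv⟩

theorem eq_of_hasDerivAt_zero_on_Ici {E : Type*} [NormedAddCommGroup E] [NormedSpace ℝ E]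
    {f : ℝ → E} {t₀ : ℝ} (hf : ∀ t ∈ Set.Ici t₀, HasDerivAt f 0 t) :
    ∀ t ∈ Set.Ici t₀, f t = f t₀ := fun t ht =>
  constant_of_has_deriv_right_zero
    (fun u hu => (hf u hu.1).continuousAt.continuousWithinAt)
    (fun u hu => (hf u hu.1).hasDerivWithinAt) t ⟨ht, le_rfl⟩

theorem HasDerivAt.eq_zero_of_eqOn_Ici {E : Type*} [NormedAddCommGroup E] [NormedSpace ℝ E]
    {f : ℝ → E} {f' c : E} {x : ℝ} (hf : HasDerivAt f f' x)
    (hc : Set.EqOn f (fun _ => c) (Set.Ici x)) : f' = 0 :=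
  (uniqueDiffOn_Ici x x Set.self_mem_Ici).eq_deriv _ hf.hasDerivWithinAt
    ((hasDerivWithinAt_const x _ c).congr hc (hc Set.self_mem_Ici))

namespace AvgESC

variable {a k1 k2 ω0 C1 C2 c1 c2 : ℝ} {x1 x2 z5 z6 : ℝ → ℝ} {s : Set ℝ} {τ : ℝ}

theorem hasDerivAt_sq_add_sq (hsol : AvgESC a k1 k2 ω0 C1 C2 c1 c2 x1 x2 z5 z6 s)
    (hτ : τ ∈ s) : HasDerivAt (fun t => z5 t ^ 2 + z6 t ^ 2) 0 τ := by
  obtain ⟨-, -, h5, h6⟩ := hsol τ hτ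
  exact ((h5.pow 2).add (h6.pow 2)).congr_deriv (by ring)

theorem sq_add_sq_eq_one {t₀ : ℝ}
    (hsol : AvgESC a k1 k2 ω0 C1 C2 c1 c2 x1 x2 z5 z6 (Set.Ici t₀))
    (hinit : z5 t₀ ^ 2 + z6 t₀ ^ 2 = 1) : ∀ τ ≥ t₀, z5 τ ^ 2 + z6 τ ^ 2 = 1 := fun τ hτ =>
  (eq_of_hasDerivAt_zero_on_Ici (fun _ ht => hsol.hasDerivAt_sq_add_sq ht) τ hτ).trans hinit

theorem hasDerivAt_output (hsol : AvgESC a k1 k2 ω0 C1 C2 c1 c2 x1 x2 z5 z6 s) (hτ : τ ∈ s) :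
    HasDerivAt (fun t => C1 * c1 * x1 t * z5 t + C2 * c2 * x2 t * z6 t)
      (-(a * k1 / ω0) * (C1 * c1 * z5 τ ^ 2 + C2 * c2 * z6 τ ^ 2) *
          (C1 * c1 * x1 τ * z5 τ + C2 * c2 * x2 τ * z6 τ) +
        (a * k2 / ω0) * (C1 * c1 * x1 τ * z6 τ - C2 * c2 * x2 τ * z5 τ) ^ 2) τ := by
  obtain ⟨h1, h2, h5, h6⟩ := hsol τ hτ
  exact (((h1.const_mul (C1 * c1)).mul h5).add ((h2.const_mul (C2 * c2)).mul h6)).congr_deriv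
    (by ring)

end AvgESC

theorem stmt16_general (a k1 k2 ω0 C1 C2 c1 c2 : ℝ)
    (ha : 0 < a) (hk2 : 0 < k2) (hω0 : 0 < ω0)
    (hC1 : 0 < C1) (hC2 : 0 < C2) (hc1 : 0 < c1) (hc2 : 0 < c2)
    (x1 x2 z5 z6 : ℝ → ℝ)
    (hsol : AvgESC a k1 k2 ω0 C1 C2 c1 c2 x1 x2 z5 z6 (Set.Ici 0))
    (hinit : z5 0 ^ 2 + z6 0 ^ 2 = 1)
    (hM : ∀ τ ≥ (0 : ℝ), C1 * c1 * x1 τ * z5 τ + C2 * c2 * x2 τ * z6 τ = 0) :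
    ∀ τ ≥ (0 : ℝ), x1 τ = 0 ∧ x2 τ = 0 := by
  intro τ hτ
  have hunit := hsol.sq_add_sq_eq_one hinit τ hτ
  have hderiv := hsol.hasDerivAt_output (Set.mem_Ici.mpr hτ)
  rw [hM τ hτ, mul_zero, zero_add] at hderiv
  have hE : C1 * c1 * x1 τ * z6 τ - C2 * c2 * x2 τ * z5 τ = 0 := by
    have hsq := hderiv.eq_zero_of_eqOn_Ici fun t (ht : τ ≤ t) => hM t (hτ.trans ht)
    have hgain : a * k2 / ω0 ≠ 0 := by positivity
    exact pow_eq_zero_iff two_ne_zero |>.mp ((mul_eq_zero.mp hsq).resolve_left hgain)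
  obtain ⟨hx1, hx2⟩ := eq_zero_of_mul_add_mul_eq_zero_of_mul_sub_mul_eq_zero (hM τ hτ) hE hunit
  exact ⟨(mul_eq_zero.mp hx1).resolve_left (by positivity),
    (mul_eq_zero.mp hx2).resolve_left (by positivity)⟩

/-- If a solution of the averaged ESC closed-loop system on `[0,∞)` starts on
the unit circle in `(z5, z6)` and satisfies `C1 c1 x1 z5 + C2 c2 x2 z6 = 0` for all `τ ≥ 0`,
then `x1(τ) = 0` and `x2(τ) = 0` for all `τ ≥ 0`. -/
theorem stmt16 (a k1 k2 ω0 C1 C2 c1 c2 : ℝ)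
    (ha : 0 < a) (hk1 : 0 < k1) (hk2 : 0 < k2) (hω0 : 0 < ω0)
    (hC1 : 0 < C1) (hC2 : 0 < C2) (hc1 : 0 < c1) (hc2 : 0 < c2)
    (x1 x2 z5 z6 : ℝ → ℝ)
    (hsol : AvgESC a k1 k2 ω0 C1 C2 c1 c2 x1 x2 z5 z6 (Set.Ici 0))
    (hinit : z5 0 ^ 2 + z6 0 ^ 2 = 1)
    (hM : ∀ τ ≥ (0 : ℝ), C1 * c1 * x1 τ * z5 τ + C2 * c2 * x2 τ * z6 τ = 0) :
    ∀ τ ≥ (0 : ℝ), x1 τ = 0 ∧ x2 τ = 0 :=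
  stmt16_general a k1 k2 ω0 C1 C2 c1 c2 ha hk2 hω0 hC1 hC2 hc1 hc2 x1 x2 z5 z6 hsol hinit hM
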